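/- Let B_h, B_v be complex M×N matrices forming a periodic complementary pair such that B_h ⋆ B_v = B_v ⋆ B_h (commuting conjugate-free periodic cross-correlations). Then the quaternion matrix B = B_h + B_v·j is a perfect quaternion array: R_B(m,n) = 0 for all (m,n) ≠ (0,0). -/

import Mathlib

noncomputable section
open scoped BigOperators

/-- Embedding of ℂ into the quaternions (zero j and k components). -/
def cq (z : ℂ) : Quaternion ℝ := ⟨z.re, z.im, 0, 0⟩

/-- The quaternion unit i. -/
def qi : Quaternion ℝ := ⟨0, 1, 0, 0⟩

/-- The quaternion unit j. -/
def qj : Quaternion ℝ := ⟨0, 0, 1, 0⟩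

/-- The quaternion unit k. -/
def qk : Quaternion ℝ := ⟨0, 0, 0, 1⟩

/-- Conjugate-free periodic cross-correlation of quaternion matrices. -/
def qcorr {M N : ℕ} [NeZero M] [NeZero N]
    (X Y : Matrix (ZMod M) (ZMod N) (Quaternion ℝ)) :
    Matrix (ZMod M) (ZMod N) (Quaternion ℝ) :=
  fun m n => ∑ k, ∑ l, X k l * Y (k + m) (l + n)

/-- Right periodic autocorrelation of a quaternion matrix. -/
def Rq {M N : ℕ} [NeZero M] [NeZero N]
    (A : Matrix (ZMod M) (ZMod N) (Quaternion ℝ)) :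
    Matrix (ZMod M) (ZMod N) (Quaternion ℝ) :=
  qcorr A (fun k l => star (A k l))

/-- Conjugate-free periodic cross-correlation of complex matrices. -/
def ccorr {M N : ℕ} [NeZero M] [NeZero N]
    (X Y : Matrix (ZMod M) (ZMod N) ℂ) : Matrix (ZMod M) (ZMod N) ℂ :=
  fun m n => ∑ k, ∑ l, X k l * Y (k + m) (l + n)

/-- Complex 2D periodic autocorrelation. -/
def Rc {M N : ℕ} [NeZero M] [NeZero N]
    (A : Matrix (ZMod M) (ZMod N) ℂ) : Matrix (ZMod M) (ZMod N) ℂ :=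
  ccorr A (fun k l => star (A k l))

/-!
Writing `B = Bₕ + Bᵥ j` with `j z = z̄ j` for complex `z`, a direct computation gives
`(a + b j)(c + d j)* = (a c̄ + b d̄) + (b c - a d) j`. Summing over the periodic shifts,
`R_B = (R_{Bₕ} + R_{Bᵥ}) + (Bᵥ ⋆ Bₕ - Bₕ ⋆ Bᵥ) j`: the complex part vanishes off the origin
because the pair is complementary, and the `j` part vanishes because the correlations commute.
-/

lemma cq_zero : cq 0 = 0 := by
  ext <;> simp only [Quaternion.re_zero, Quaternion.imI_zero, Quaternion.imJ_zero,
    Quaternion.imK_zero] <;> simp [cq]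

lemma cq_add (x y : ℂ) : cq (x + y) = cq x + cq y := by
  ext <;> simp only [Quaternion.re_add, Quaternion.imI_add, Quaternion.imJ_add,
    Quaternion.imK_add] <;> simp [cq]

def cqAddHom : ℂ →+ Quaternion ℝ := AddMonoidHom.mk' cq cq_add

lemma cq_sum {ι : Type*} (s : Finset ι) (f : ι → ℂ) :
    cq (∑ i ∈ s, f i) = ∑ i ∈ s, cq (f i) :=
  map_sum cqAddHom f s

lemma cq_add_cq_mul_qj_mul_star (a b c d : ℂ) :
    (cq a + cq b * qj) * star (cq c + cq d * qj)
      = cq (a * star c + b * star d) + cq (b * c - a * d) * qj := by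
  ext <;>
    simp only [Quaternion.re_mul, Quaternion.imI_mul, Quaternion.imJ_mul, Quaternion.imK_mul,
      Quaternion.re_add, Quaternion.imI_add, Quaternion.imJ_add, Quaternion.imK_add,
      Quaternion.re_star, Quaternion.imI_star, Quaternion.imJ_star, Quaternion.imK_star] <;>
    simp [cq, qj, Complex.mul_re, Complex.mul_im] <;>
    ring

lemma Rq_cq_add_cq_mul_qj {M N : ℕ} [NeZero M] [NeZero N]
    (X Y : Matrix (ZMod M) (ZMod N) ℂ) (m : ZMod M) (n : ZMod N) :
    Rq (fun k l => cq (X k l) + cq (Y k l) * qj) m n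
      = cq (Rc X m n + Rc Y m n) + cq (ccorr Y X m n - ccorr X Y m n) * qj := by
  simp only [Rq, qcorr, cq_add_cq_mul_qj_mul_star, Finset.sum_add_distrib, ← Finset.sum_mul,
    ← cq_sum, Rc, ccorr, Finset.sum_sub_distrib]

theorem pqa_from_commuting_pcp {M N : ℕ} [NeZero M] [NeZero N]
    (Bh Bv : Matrix (ZMod M) (ZMod N) ℂ)
    (hpcp : ∀ m n, (m, n) ≠ (0, 0) → Rc Bh m n + Rc Bv m n = 0)
    (hcomm : ccorr Bh Bv = ccorr Bv Bh) :
    ∀ m n, (m, n) ≠ (0, 0) →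
      Rq (fun k l => cq (Bh k l) + cq (Bv k l) * qj) m n = 0 := by
  intro m n hmn
  rw [Rq_cq_add_cq_mul_qj, hpcp m n hmn, hcomm, sub_self, cq_zero, zero_mul, add_zero]
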